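/- Let G be a group with finite presentation ⟨x₁,…,x_n | R₁,…,R_p⟩ and let r be the maximal length of a relator. If 2d > r, then the Rips complex P_d(G) is simply connected. -/

import Mathlib

/-- Word metric: the least number of generators from `S` needed to write `x⁻¹y`. -/
noncomputable def wordDist {G : Type*} [Group G] (S : Set G) (x y : G) : ℕ :=
  sInf {n : ℕ | ∃ l : List G, l.length = n ∧ (∀ s ∈ l, s ∈ S) ∧ x * l.prod = y}

/-- Elementary moves on simplicial edge paths in the Rips complex with
closeness relation `close`: insert a vertex forming a triangle, or remove a
repeated vertex. -/
inductive RipsMove {V : Type*} (close : V → V → Prop) : List V → List V → Prop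
  | ins (u w : List V) (a b c : V) :
      close a c → close c b → close a b →
      RipsMove close (u ++ [a, b] ++ w) (u ++ [a, c, b] ++ w)
  | dedup (u w : List V) (a : V) :
      RipsMove close (u ++ [a, a] ++ w) (u ++ [a] ++ w)

/-- The symmetric generating set of a presented group: the images of the
generators and their inverses. -/
def presGens {n : ℕ} (rels : Set (FreeGroup (Fin n))) : Set (PresentedGroup rels) :=
  Set.range (PresentedGroup.of (rels := rels)) ∪
    (fun g => g⁻¹) '' Set.range (PresentedGroup.of (rels := rels))

/-!
Inserting a geodesic between consecutive vertices (every new vertex lies within `d` of both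
ends, so each insertion is a triangle of `P_d(G)`) turns a loop into the edge path spelled by
a word in the generators. Free reductions remove backtracks, so up to homotopy this path only
depends on the element `g` of the free group, and the closed loop corresponds to `g` lying in
the normal closure of the relators. The `g` whose loops contract form a normal subgroup, which
contains every relator: a loop of length `≤ r < 2d` has any two of its vertices joined by an arc
of length `≤ d`, so it spans a simplex.
-/

section RipsHomotopy

variable {V : Type*} {close : V → V → Prop}

abbrev RipsHomotopic (close : V → V → Prop) : List V → List V → Prop :=
  Relation.EqvGen (RipsMove close)

theorem RipsMove.append_append {l l' : List V} (h : RipsMove close l l') (p q : List V) :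
    RipsMove close (p ++ l ++ q) (p ++ l' ++ q) := by
  cases h with
  | ins u w a b c hac hcb hab => simpa using RipsMove.ins (p ++ u) (w ++ q) a b c hac hcb hab
  | dedup u w a => simpa using RipsMove.dedup (close := close) (p ++ u) (w ++ q) a

namespace RipsHomotopic

theorem refl (l : List V) : RipsHomotopic close l l := Relation.EqvGen.refl l

theorem symm {l l' : List V} (h : RipsHomotopic close l l') : RipsHomotopic close l' l :=
  Relation.EqvGen.symm _ _ h

theorem trans {l₁ l₂ l₃ : List V} (h : RipsHomotopic close l₁ l₂)
    (h' : RipsHomotopic close l₂ l₃) : RipsHomotopic close l₁ l₃ :=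
  Relation.EqvGen.trans _ _ _ h h'

theorem append_append {l l' : List V} (h : RipsHomotopic close l l') (p q : List V) :
    RipsHomotopic close (p ++ l ++ q) (p ++ l' ++ q) := by
  induction h with
  | rel _ _ h => exact .rel _ _ (h.append_append p q)
  | refl => exact .refl _
  | symm _ _ _ ih => exact ih.symm
  | trans _ _ _ _ _ ih ih' => exact ih.trans ih'

theorem triangle {a b c : V} (hac : close a c) (hcb : close c b) (hab : close a b) :
    RipsHomotopic close [a, b] [a, c, b] :=
  .rel _ _ (by simpa using RipsMove.ins [] [] a b c hac hcb hab)

theorem dedup (a : V) : RipsHomotopic close [a, a] [a] :=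
  .rel _ _ (by simpa using RipsMove.dedup (close := close) [] [] a)

theorem backtrack {a b : V} (hab : close a b) (hba : close b a) (haa : close a a) :
    RipsHomotopic close [a, b, a] [a] :=
  (triangle hab hba haa).symm.trans (dedup a)

theorem of_pairwise {x y : V} {t : List V} (h : (x :: (t ++ [y])).Pairwise close) :
    RipsHomotopic close (x :: (t ++ [y])) [x, y] := by
  induction t generalizing x with
  | nil => exact refl _
  | cons c t ih =>
    obtain ⟨hx, hc⟩ := List.pairwise_cons.mp h
    have hcy : close c y := (List.pairwise_cons.mp hc).1 y (by simp)
    have hpath := (ih hc).append_append [x] []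
    simp only [List.cons_append, List.nil_append, List.append_nil] at hpath
    exact hpath.trans (triangle (hx c (by simp)) hcy (hx y (by simp))).symm

end RipsHomotopic

end RipsHomotopy

section WordMetric

variable {G : Type*} [Group G] {S : Set G} {d : ℕ}

abbrev ripsClose (S : Set G) (d : ℕ) (a b : G) : Prop := wordDist S a b ≤ d

theorem wordDist_le_length {x y : G} {l : List G} (hl : ∀ s ∈ l, s ∈ S) (h : x * l.prod = y) :
    wordDist S x y ≤ l.length :=
  Nat.sInf_le ⟨l, rfl, hl, h⟩

theorem wordDist_self (x : G) : wordDist S x x = 0 :=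
  Nat.le_zero.mp (by simpa using wordDist_le_length (S := S) (l := []) (by simp) (mul_one x))

theorem wordDist_comm (hS : ∀ s ∈ S, s⁻¹ ∈ S) (x y : G) : wordDist S x y = wordDist S y x := by
  have reverse : ∀ x y : G, ∀ m, (∃ l : List G, l.length = m ∧ (∀ s ∈ l, s ∈ S) ∧ x * l.prod = y) →
      ∃ l : List G, l.length = m ∧ (∀ s ∈ l, s ∈ S) ∧ y * l.prod = x := by
    rintro x y m ⟨l, rfl, hl, rfl⟩
    refine ⟨(l.map (·⁻¹)).reverse, by simp, ?_, ?_⟩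
    · simp only [List.mem_reverse, List.mem_map]
      rintro _ ⟨s, hs, rfl⟩
      exact hS s (hl s hs)
    rw [← List.prod_inv_reverse, mul_inv_cancel_right]
  unfold wordDist
  congr 1
  ext m
  exact ⟨reverse x y m, reverse y x m⟩

theorem exists_length_eq_wordDist {x y : G}
    (h : ∃ l : List G, (∀ s ∈ l, s ∈ S) ∧ x * l.prod = y) :
    ∃ l : List G, l.length = wordDist S x y ∧ (∀ s ∈ l, s ∈ S) ∧ x * l.prod = y := by
  obtain ⟨l, hl, hprod⟩ := h
  exact Nat.sInf_mem (s := {m | ∃ l : List G, l.length = m ∧ (∀ s ∈ l, s ∈ S) ∧ x * l.prod = y})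
    ⟨_, l, rfl, hl, hprod⟩

theorem ripsClose_mul_prod {l : List G} (hl : ∀ s ∈ l, s ∈ S) (hlen : l.length ≤ d) (x : G) :
    ripsClose S d x (x * l.prod) :=
  (wordDist_le_length hl rfl).trans hlen

end WordMetric

section EdgePaths

variable {G : Type*} [Group G]

theorem List.foldl_mul_eq_mul_prod (x : G) (l : List G) : l.foldl (· * ·) x = x * l.prod := by
  induction l generalizing x with
  | nil => simp
  | cons s l ih => simp [ih, mul_assoc]

theorem List.scanl_mul_append (x : G) (l₁ l₂ : List G) :
    (l₁ ++ l₂).scanl (· * ·) x = l₁.scanl (· * ·) x ++ (l₂.scanl (· * ·) (x * l₁.prod)).tail := by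
  rw [List.scanl_append, List.foldl_mul_eq_mul_prod]

theorem List.scanl_mul_eq_cons_tail (x : G) (l : List G) :
    l.scanl (· * ·) x = x :: (l.scanl (· * ·) x).tail := by
  cases l <;> simp

theorem List.scanl_mul_eq_dropLast_append (x : G) (l : List G) :
    l.scanl (· * ·) x = (l.scanl (· * ·) x).dropLast ++ [x * l.prod] := by
  rw [← List.foldl_mul_eq_mul_prod, ← List.getLast_scanl List.scanl_ne_nil,
    List.dropLast_append_getLast]

theorem RipsHomotopic.scanl_mul_splice {close : G → G → Prop} {a b c : List G} {x : G}
    (hb : RipsHomotopic close (b.scanl (· * ·) (x * a.prod)) [x * a.prod]) (hprod : b.prod = 1) :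
    RipsHomotopic close ((a ++ b ++ c).scanl (· * ·) x) ((a ++ c).scanl (· * ·) x) := by
  obtain ⟨A, hA⟩ : ∃ A, a.scanl (· * ·) x = A ++ [x * a.prod] :=
    ⟨_, List.scanl_mul_eq_dropLast_append x a⟩
  obtain ⟨B, hB⟩ : ∃ B, b.scanl (· * ·) (x * a.prod) = x * a.prod :: B :=
    ⟨_, List.scanl_mul_eq_cons_tail _ b⟩
  have hsplice := hb.append_append A (c.scanl (· * ·) (x * a.prod)).tail
  rw [List.append_assoc, List.scanl_mul_append, List.scanl_mul_append x a c,
    List.scanl_mul_append _ b c, hprod, mul_one, hA, hB]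
  rw [hB] at hsplice
  simpa using hsplice

variable {S : Set G} {d : ℕ}

theorem ripsHomotopic_pair_scanl_mul (hd : 1 ≤ d) {l : List G} (hl : ∀ s ∈ l, s ∈ S)
    (hlen : l.length ≤ d) (a : G) :
    RipsHomotopic (ripsClose S d) [a, a * l.prod] (l.scanl (· * ·) a) := by
  induction l generalizing a with
  | nil => simpa using RipsHomotopic.dedup a
  | cons s l ih =>
    have hl' : ∀ t ∈ l, t ∈ S := fun t ht => hl t (by simp [ht])
    have hlen' : l.length ≤ d := by simp at hlen; omega
    have hfirst : ripsClose S d a (a * s) := by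
      simpa using ripsClose_mul_prod (l := [s]) (by simpa using hl s (by simp)) (by simpa) a
    have hrest : ripsClose S d (a * s) (a * (s :: l).prod) := by
      simpa [mul_assoc] using ripsClose_mul_prod hl' hlen' (a * s)
    have htail := (ih hl' hlen' (a * s)).append_append [a] []
    refine (RipsHomotopic.triangle hfirst hrest (ripsClose_mul_prod hl hlen a)).trans ?_
    simpa [mul_assoc] using htail

theorem ripsHomotopic_scanl_mul_cancel (hd : 1 ≤ d) (hS : ∀ s ∈ S, s⁻¹ ∈ S) {s : G} (hs : s ∈ S)
    (x : G) (u v : List G) :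
    RipsHomotopic (ripsClose S d) ((u ++ [s, s⁻¹] ++ v).scanl (· * ·) x)
      ((u ++ v).scanl (· * ·) x) := by
  refine RipsHomotopic.scanl_mul_splice ?_ (by simp)
  have hclose : ripsClose S d (x * u.prod) (x * u.prod * s) := by
    simpa using ripsClose_mul_prod (l := [s]) (by simpa using hs) (by simpa) (x * u.prod)
  simpa using RipsHomotopic.backtrack hclose
    (by rwa [ripsClose, wordDist_comm hS]) (by simp [ripsClose, wordDist_self])

theorem pairwise_ripsClose_scanl_mul (hS : ∀ s ∈ S, s⁻¹ ∈ S) {l : List G}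
    (hl : ∀ s ∈ l, s ∈ S) (hprod : l.prod = 1) (hlen : l.length ≤ 2 * d) (z : G) :
    (l.scanl (· * ·) z).Pairwise (ripsClose S d) := by
  rw [List.pairwise_iff_getElem]
  intro i j hi hj hij
  simp only [List.length_scanl] at hi hj
  simp only [List.getElem_scanl, List.foldl_mul_eq_mul_prod]
  -- The two arcs of the loop between vertices `i` and `j` have lengths `j - i` and
  -- `l.length - (j - i)`, and one of them is at most `l.length / 2 ≤ d`.
  have hforward : wordDist S (z * (l.take i).prod) (z * (l.take j).prod) ≤ j - i := by
    have h := wordDist_le_length (S := S) (x := z * (l.take i).prod)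
      (fun s hs => hl s (List.mem_of_mem_drop (List.mem_of_mem_take hs)))
      (show _ = z * (l.take j).prod by
        rw [mul_assoc, ← List.prod_append, ← List.take_add, Nat.add_sub_cancel' hij.le])
    simpa using h.trans (by simp)
  have hbackward : wordDist S (z * (l.take j).prod) (z * (l.take i).prod) ≤
      (l.drop j ++ l.take i).length :=
    wordDist_le_length (S := S) (x := z * (l.take j).prod) (l := l.drop j ++ l.take i)
      (fun s hs => by
        rcases List.mem_append.mp hs with hs | hs
        exacts [hl s (List.mem_of_mem_drop hs), hl s (List.mem_of_mem_take hs)])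
      (by rw [List.prod_append, mul_assoc, ← mul_assoc (l.take j).prod, ← List.prod_append,
        List.take_append_drop, hprod, one_mul])
  rw [wordDist_comm hS] at hbackward
  simp only [List.length_append, List.length_drop, List.length_take] at hbackward
  show wordDist S _ _ ≤ d
  omega

theorem ripsHomotopic_scanl_mul_singleton (hS : ∀ s ∈ S, s⁻¹ ∈ S) {l : List G}
    (hl : ∀ s ∈ l, s ∈ S) (hprod : l.prod = 1) (hlen : l.length ≤ 2 * d) (z : G) :
    RipsHomotopic (ripsClose S d) (l.scanl (· * ·) z) [z] := by
  cases l with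
  | nil => exact RipsHomotopic.refl _
  | cons s t =>
    have hz : z * s * t.prod = z := by rw [mul_assoc, ← List.prod_cons, hprod, mul_one]
    obtain ⟨T, hT⟩ : ∃ T, t.scanl (· * ·) (z * s) = T ++ [z] :=
      ⟨_, hz ▸ List.scanl_mul_eq_dropLast_append (z * s) t⟩
    have hpairwise := pairwise_ripsClose_scanl_mul hS hl hprod hlen z
    rw [List.scanl_cons, hT] at hpairwise ⊢
    exact (RipsHomotopic.of_pairwise hpairwise).trans (RipsHomotopic.dedup z)

theorem exists_ripsHomotopic_scanl_mul (hd : 1 ≤ d)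
    (hgen : ∀ a b : G, ∃ l : List G, (∀ s ∈ l, s ∈ S) ∧ a * l.prod = b) {x : G} {t : List G}
    (hchain : (x :: t).IsChain (ripsClose S d)) :
    ∃ l : List G, (∀ s ∈ l, s ∈ S) ∧ (x :: t).getLast? = some (x * l.prod) ∧
      RipsHomotopic (ripsClose S d) (x :: t) (l.scanl (· * ·) x) := by
  induction t generalizing x with
  | nil => exact ⟨[], by simp, by simp, by simpa using RipsHomotopic.refl [x]⟩
  | cons y t ih =>
    obtain ⟨hxy, hchain⟩ := List.isChain_cons_cons.mp hchain
    obtain ⟨l, hl, hlast, hhom⟩ := ih hchain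
    obtain ⟨g, hglen, hg, hgprod⟩ := exists_length_eq_wordDist (hgen x y)
    refine ⟨g ++ l, ?_, ?_, ?_⟩
    · simpa [or_imp, forall_and] using And.intro hg hl
    · rw [List.getLast?_cons_cons, hlast, List.prod_append, ← mul_assoc, hgprod]
    · obtain ⟨T, hT⟩ : ∃ T, l.scanl (· * ·) y = y :: T := ⟨_, List.scanl_mul_eq_cons_tail y l⟩
      have hrest := hhom.append_append [x] []
      have hfirst := (ripsHomotopic_pair_scanl_mul hd hg (hglen ▸ hxy) x).append_append [] T
      rw [List.scanl_mul_append, hgprod, hT]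
      rw [hgprod] at hfirst
      rw [hT] at hrest
      simp only [List.nil_append, List.append_nil, List.tail_cons,
        List.cons_append] at hrest hfirst ⊢
      exact hrest.trans hfirst

end EdgePaths

section PresentedGroup

variable {n : ℕ} {rels : Set (FreeGroup (Fin n))} {d : ℕ}

def letter (rels : Set (FreeGroup (Fin n))) (p : Fin n × Bool) : PresentedGroup rels :=
  cond p.2 (PresentedGroup.of p.1) (PresentedGroup.of p.1)⁻¹

theorem letter_mem_presGens (p : Fin n × Bool) : letter rels p ∈ presGens rels := by
  obtain ⟨i, _ | _⟩ := p
  exacts [Or.inr ⟨_, ⟨i, rfl⟩, rfl⟩, Or.inl ⟨i, rfl⟩]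

theorem mem_presGens_of_mem_map_letter {w : List (Fin n × Bool)} {s : PresentedGroup rels}
    (hs : s ∈ w.map (letter rels)) : s ∈ presGens rels := by
  obtain ⟨p, -, rfl⟩ := List.mem_map.mp hs
  exact letter_mem_presGens p

theorem inv_mem_presGens {s : PresentedGroup rels} (hs : s ∈ presGens rels) :
    s⁻¹ ∈ presGens rels := by
  rcases hs with ⟨i, rfl⟩ | ⟨_, ⟨i, rfl⟩, rfl⟩
  exacts [Or.inr ⟨_, ⟨i, rfl⟩, rfl⟩, by rw [inv_inv]; exact Or.inl ⟨i, rfl⟩]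

instance : CanLift (PresentedGroup rels) (Fin n × Bool) (letter rels) (· ∈ presGens rels) where
  prf s hs := by
    rcases hs with ⟨i, rfl⟩ | ⟨_, ⟨i, rfl⟩, rfl⟩
    exacts [⟨(i, true), rfl⟩, ⟨(i, false), rfl⟩]

theorem prod_map_letter (w : List (Fin n × Bool)) :
    (w.map (letter rels)).prod = PresentedGroup.mk rels (FreeGroup.mk w) := by
  rw [FreeGroup.lift_unique (PresentedGroup.mk rels) (fun _ => rfl), FreeGroup.lift_mk]
  rfl

theorem exists_mem_presGens_mul_prod_eq (a b : PresentedGroup rels) :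
    ∃ l : List (PresentedGroup rels), (∀ s ∈ l, s ∈ presGens rels) ∧ a * l.prod = b := by
  obtain ⟨g, hg⟩ := PresentedGroup.mk_surjective rels (a⁻¹ * b)
  refine ⟨g.toWord.map (letter rels), fun _ => mem_presGens_of_mem_map_letter, ?_⟩
  rw [prod_map_letter, FreeGroup.mk_toWord, hg, mul_inv_cancel_left]

theorem ripsHomotopic_scanl_map_letter_of_red (hd : 1 ≤ d) {w w' : List (Fin n × Bool)}
    (h : FreeGroup.Red w w') (x : PresentedGroup rels) :
    RipsHomotopic (ripsClose (presGens rels) d) ((w.map (letter rels)).scanl (· * ·) x)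
      ((w'.map (letter rels)).scanl (· * ·) x) := by
  induction h with
  | refl => exact RipsHomotopic.refl _
  | tail _ hstep ih =>
    obtain @⟨L₁, L₂, i, b⟩ := hstep
    have hinv : letter rels (i, !b) = (letter rels (i, b))⁻¹ := by cases b <;> simp [letter]
    refine ih.trans ?_
    simpa [hinv] using ripsHomotopic_scanl_mul_cancel hd (fun _ => inv_mem_presGens)
      (letter_mem_presGens (i, b)) x (L₁.map (letter rels)) (L₂.map (letter rels))

theorem ripsHomotopic_scanl_map_letter_of_mk_eq (hd : 1 ≤ d) {w w' : List (Fin n × Bool)}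
    (h : FreeGroup.mk w = FreeGroup.mk w') (x : PresentedGroup rels) :
    RipsHomotopic (ripsClose (presGens rels) d) ((w.map (letter rels)).scanl (· * ·) x)
      ((w'.map (letter rels)).scanl (· * ·) x) := by
  obtain ⟨v, hv, hv'⟩ := FreeGroup.Red.exact.mp h
  exact (ripsHomotopic_scanl_map_letter_of_red hd hv x).trans
    (ripsHomotopic_scanl_map_letter_of_red hd hv' x).symm

def wordPath (x : PresentedGroup rels) (g : FreeGroup (Fin n)) : List (PresentedGroup rels) :=
  (g.toWord.map (letter rels)).scanl (· * ·) x

theorem ripsHomotopic_wordPath_mul_mul (hd : 1 ≤ d) {g : FreeGroup (Fin n)}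
    (hg₁ : PresentedGroup.mk rels g = 1)
    (hg : ∀ y, RipsHomotopic (ripsClose (presGens rels) d) (wordPath y g) [y])
    (u v : FreeGroup (Fin n)) (x : PresentedGroup rels) :
    RipsHomotopic (ripsClose (presGens rels) d) (wordPath x (u * g * v)) (wordPath x (u * v)) := by
  have hsplice := RipsHomotopic.scanl_mul_splice (a := u.toWord.map (letter rels))
    (b := g.toWord.map (letter rels)) (c := v.toWord.map (letter rels)) (x := x) (hg _)
    (by rw [prod_map_letter, FreeGroup.mk_toWord, hg₁])
  rw [← List.map_append, ← List.map_append, ← List.map_append] at hsplice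
  refine (ripsHomotopic_scanl_map_letter_of_mk_eq hd ?_ x).trans
    (hsplice.trans (ripsHomotopic_scanl_map_letter_of_mk_eq hd ?_ x))
  · rw [FreeGroup.mk_toWord, ← FreeGroup.mul_mk, ← FreeGroup.mul_mk, FreeGroup.mk_toWord,
      FreeGroup.mk_toWord, FreeGroup.mk_toWord]
  · rw [FreeGroup.mk_toWord, ← FreeGroup.mul_mk, FreeGroup.mk_toWord, FreeGroup.mk_toWord]

def contractibleLoops (rels : Set (FreeGroup (Fin n))) {d : ℕ} (hd : 1 ≤ d) :
    Subgroup (FreeGroup (Fin n)) where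
  carrier := {g | PresentedGroup.mk rels g = 1 ∧
    ∀ x, RipsHomotopic (ripsClose (presGens rels) d) (wordPath x g) [x]}
  one_mem' := ⟨map_one _, fun x => by simpa [wordPath] using RipsHomotopic.refl [x]⟩
  mul_mem' := by
    rintro g h ⟨hg₁, hg⟩ ⟨hh₁, hh⟩
    refine ⟨by rw [map_mul, hg₁, hh₁, one_mul], fun x => ?_⟩
    have hmul := ripsHomotopic_wordPath_mul_mul hd hg₁ hg 1 h x
    rw [one_mul, one_mul] at hmul
    exact hmul.trans (hh x)
  inv_mem' := by
    rintro g ⟨hg₁, hg⟩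
    refine ⟨by rw [map_inv, hg₁, inv_one], fun x => ?_⟩
    simpa [wordPath] using (ripsHomotopic_wordPath_mul_mul hd hg₁ hg 1 g⁻¹ x).symm

theorem contractibleLoops_normal (hd : 1 ≤ d) : (contractibleLoops rels hd).Normal where
  conj_mem g := by
    rintro ⟨hg₁, hg⟩ u
    refine ⟨by simp [hg₁], fun x => ?_⟩
    simpa [wordPath] using ripsHomotopic_wordPath_mul_mul hd hg₁ hg u u⁻¹ x

theorem mem_contractibleLoops_of_mem (hd : 1 ≤ d) {ρ : FreeGroup (Fin n)} (hρ : ρ ∈ rels)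
    (hlen : ρ.toWord.length ≤ 2 * d) : ρ ∈ contractibleLoops rels hd := by
  have hρ₁ : PresentedGroup.mk rels ρ = 1 := PresentedGroup.one_of_mem hρ
  refine ⟨hρ₁, ripsHomotopic_scanl_mul_singleton (fun _ => inv_mem_presGens)
    (fun _ => mem_presGens_of_mem_map_letter) ?_ (by simpa)⟩
  rw [prod_map_letter, FreeGroup.mk_toWord, hρ₁]

theorem normalClosure_le_contractibleLoops (hd : 1 ≤ d)
    (hlen : ∀ ρ ∈ rels, ρ.toWord.length ≤ 2 * d) :
    Subgroup.normalClosure rels ≤ contractibleLoops rels hd :=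
  have := contractibleLoops_normal (rels := rels) hd
  Subgroup.normalClosure_le_normal fun ρ hρ => mem_contractibleLoops_of_mem hd hρ (hlen ρ hρ)

end PresentedGroup

theorem stmt7_general {n : ℕ} (rels : Set (FreeGroup (Fin n)))
    (r d : ℕ) (hr : ∀ w ∈ rels, (FreeGroup.toWord w).length ≤ r)
    (hd : r < 2 * d) :
    ∀ (x : PresentedGroup rels) (l : List (PresentedGroup rels)),
      l.head? = some x → l.getLast? = some x →
      l.Chain' (fun a b => wordDist (presGens rels) a b ≤ d) →
      Relation.EqvGen (RipsMove (fun a b => wordDist (presGens rels) a b ≤ d))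
        l [x] := by
  intro x l hhead hlast hchain
  have hd₁ : 1 ≤ d := by omega
  obtain ⟨t, rfl⟩ := List.head?_eq_some_iff.mp hhead
  obtain ⟨steps, hsteps, hlast', hpath⟩ :=
    exists_ripsHomotopic_scanl_mul hd₁ exists_mem_presGens_mul_prod_eq hchain
  lift steps to List (Fin n × Bool) using hsteps with w
  have hw : FreeGroup.mk w ∈ contractibleLoops rels hd₁ := by
    refine normalClosure_le_contractibleLoops hd₁ (fun ρ hρ => (hr ρ hρ).trans hd.le) ?_
    rw [← PresentedGroup.mk_eq_one_iff, ← prod_map_letter]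
    simpa using hlast'.symm.trans hlast
  exact hpath.trans
    ((ripsHomotopic_scanl_map_letter_of_mk_eq hd₁ FreeGroup.mk_toWord.symm x).trans (hw.2 x))

/-- Let `G = ⟨x₁,…,x_n ∣ R₁,…,R_p⟩` be a finite presentation with all relators
of length `≤ r`. If `2d > r` then the Rips complex `P_d(G)` is simply
connected: every simplicial loop (a list of vertices with consecutive word
distances `≤ d`, starting and ending at `x`) can be contracted to the constant
loop by elementary moves. -/
theorem stmt7 {n : ℕ} (rels : Set (FreeGroup (Fin n))) (hfin : rels.Finite)
    (r d : ℕ) (hr : ∀ w ∈ rels, (FreeGroup.toWord w).length ≤ r)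
    (hd : r < 2 * d) :
    ∀ (x : PresentedGroup rels) (l : List (PresentedGroup rels)),
      l.head? = some x → l.getLast? = some x →
      l.Chain' (fun a b => wordDist (presGens rels) a b ≤ d) →
      Relation.EqvGen (RipsMove (fun a b => wordDist (presGens rels) a b ≤ d))
        l [x] :=
  stmt7_general rels r d hr hd
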